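/- For every nested regular expression E, one can construct a nested NFA whose semantics coincides with that of E in every interpretation; formally, for every NRE E there exists a nested NFA A such that for every interpretation I, the binary relation defined by E on I equals the binary relation defined by A on I. -/
import Mathlib

set_option autoImplicit false

namespace Paper

abbrev CN := ℕ
abbrev RN := ℕ
abbrev Ind := ℕ

structure Interp where
  Dom : Type
  nonempty : Nonempty Dom
  ind : Ind → Dom
  cn : CN → Set Dom
  rn : RN → Dom → Dom → Prop

inductive ERole where
  | name (p : RN)
  | inv (p : RN)
deriving DecidableEq

def ERole.sem (I : Interp) : ERole → I.Dom → I.Dom → Prop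
  | .name p => I.rn p
  | .inv p => fun x y => I.rn p y x

def ERole.einv : ERole → ERole
  | .name p => .inv p
  | .inv p => .name p

inductive Role where
  | er (r : ERole)
  | ctest (A : CN)
  | itest (a : Ind)
deriving DecidableEq

def Role.sem (I : Interp) : Role → I.Dom → I.Dom → Prop
  | .er r => r.sem I
  | .ctest A => fun x y => x = y ∧ x ∈ I.cn A
  | .itest a => fun x y => x = I.ind a ∧ y = I.ind a

inductive NRE where
  | role (σ : Role)
  | comp (E₁ E₂ : NRE)
  | union (E₁ E₂ : NRE)
  | star (E : NRE)
  | test (E : NRE)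

def NRE.sem (I : Interp) : NRE → I.Dom → I.Dom → Prop
  | .role σ => σ.sem I
  | .comp E₁ E₂ => fun x z => ∃ y, E₁.sem I x y ∧ E₂.sem I y z
  | .union E₁ E₂ => fun x y => E₁.sem I x y ∨ E₂.sem I x y
  | .star E => Relation.ReflTransGen (E.sem I)
  | .test E => fun x y => x = y ∧ ∃ z, E.sem I x z

def Role.NoITest : Role → Prop
  | .itest _ => False
  | _ => True

def NRE.NoITest : NRE → Prop
  | .role σ => σ.NoITest
  | .comp E₁ E₂ => E₁.NoITest ∧ E₂.NoITest
  | .union E₁ E₂ => E₁.NoITest ∧ E₂.NoITest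
  | .star E => E.NoITest
  | .test E => E.NoITest

def NRE.NestFree : NRE → Prop
  | .role _ => True
  | .comp E₁ E₂ => E₁.NestFree ∧ E₂.NestFree
  | .union E₁ E₂ => E₁.NestFree ∧ E₂.NestFree
  | .star E => E.NestFree
  | .test _ => False

structure NNFA where
  n : ℕ
  St : Fin n → Type
  init : ∀ i, St i
  final : ∀ i, Set (St i)
  transRole : ∀ i, St i → Role → St i → Prop
  transTest : ∀ i, St i → Fin n → St i → Prop
  test_gt : ∀ i s j s', transTest i s j s' → i < j

inductive NNFA.Accept (M : NNFA) (I : Interp) :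
    ∀ i : Fin M.n, M.St i → Set (M.St i) → I.Dom → I.Dom → Prop where
  | refl {i : Fin M.n} {s : M.St i} {F : Set (M.St i)} {o : I.Dom} :
      s ∈ F → NNFA.Accept M I i s F o o
  | step {i : Fin M.n} {s s' : M.St i} {F : Set (M.St i)} {σ : Role} {o o' o'' : I.Dom} :
      M.transRole i s σ s' → σ.sem I o o' → NNFA.Accept M I i s' F o' o'' →
      NNFA.Accept M I i s F o o''
  | test {i : Fin M.n} {s s' : M.St i} {F : Set (M.St i)} {j : Fin M.n} {o o₁ o'' : I.Dom} :
      M.transTest i s j s' → NNFA.Accept M I j (M.init j) (M.final j) o o₁ →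
      NNFA.Accept M I i s' F o o'' → NNFA.Accept M I i s F o o''

def NNFA.NoITest (M : NNFA) : Prop :=
  ∀ i (s : M.St i) (a : Ind) (s' : M.St i), ¬ M.transRole i s (.itest a) s'

inductive RTree (L : Type) where
  | leaf (l : L)
  | one (l : L) (c : RTree L)
  | two (l : L) (c₁ c₂ : RTree L)

def RTree.label {L : Type} : RTree L → L
  | .leaf l => l
  | .one l _ => l
  | .two l _ _ => l

def RTree.leaves {L : Type} : RTree L → List L
  | .leaf l => [l]
  | .one _ c => c.leaves
  | .two _ c₁ c₂ => c₁.leaves ++ c₂.leaves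

def NNFA.IsRun (M : NNFA) (I : Interp) : RTree ((Σ i, M.St i) × I.Dom) → Prop
  | .leaf _ => True
  | .one l c => M.IsRun I c ∧
      ∃ (σ : Role) (s' : M.St l.1.1) (o' : I.Dom),
        M.transRole l.1.1 l.1.2 σ s' ∧ σ.sem I l.2 o' ∧ c.label = (⟨l.1.1, s'⟩, o')
  | .two l c₁ c₂ => M.IsRun I c₁ ∧ M.IsRun I c₂ ∧
      ∃ (j : Fin M.n) (s' : M.St l.1.1),
        M.transTest l.1.1 l.1.2 j s' ∧ c₁.label = (⟨l.1.1, s'⟩, l.2) ∧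
        c₂.label = (⟨j, M.init j⟩, l.2)

def NNFA.FullRun (M : NNFA) (I : Interp) (i : Fin M.n) (o₁ : I.Dom) (s₁ : M.St i)
    (o₂ : I.Dom) (s₂ : M.St i) (t : RTree ((Σ j, M.St j) × I.Dom)) : Prop :=
  M.IsRun I t ∧ t.label = (⟨i, s₁⟩, o₁) ∧ ((⟨i, s₂⟩ : Σ j, M.St j), o₂) ∈ t.leaves ∧
  ∀ l ∈ t.leaves, l ≠ ((⟨i, s₂⟩ : Σ j, M.St j), o₂) → l.1.2 ∈ M.final l.1.1

end Paper
namespace Paper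

/-! ### Auxiliary construction for `nre_to_nnfa` -/

/-- direct test subexpressions -/
def NRE.dtests : NRE → List NRE
  | .role _ => []
  | .comp E₁ E₂ => E₁.dtests ++ E₂.dtests
  | .union E₁ E₂ => E₁.dtests ++ E₂.dtests
  | .star E => E.dtests
  | .test E => [E]

/-- all test subexpressions, in a nesting-compatible order -/
def NRE.testsOf : NRE → List NRE
  | .role _ => []
  | .comp E₁ E₂ => E₁.testsOf ++ E₂.testsOf
  | .union E₁ E₂ => E₁.testsOf ++ E₂.testsOf
  | .star E => E.testsOf
  | .test E => E :: E.testsOf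

lemma dtests_subset (E : NRE) : ∀ F ∈ E.dtests, F ∈ E.testsOf := by
  induction E with
  | role σ => simp [NRE.dtests, NRE.testsOf]
  | comp E₁ E₂ ih₁ ih₂ =>
      intro F hF
      simp only [NRE.dtests, NRE.testsOf, List.mem_append] at hF ⊢
      exact hF.imp (ih₁ F) (ih₂ F)
  | union E₁ E₂ ih₁ ih₂ =>
      intro F hF
      simp only [NRE.dtests, NRE.testsOf, List.mem_append] at hF ⊢
      exact hF.imp (ih₁ F) (ih₂ F)
  | star E ih => exact ih
  | test E ih =>
      intro F hF
      simp only [NRE.dtests, List.mem_singleton] at hF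
      simp [NRE.testsOf, hF]

lemma suffix_append_cases {α : Type*} {l a b : List α} (h : l <:+ a ++ b) :
    l <:+ b ∨ ∃ l', l = l' ++ b ∧ l' <:+ a := by
  induction a with
  | nil => exact Or.inl (by simpa using h)
  | cons x a ih =>
      rw [List.cons_append, List.suffix_cons_iff] at h
      rcases h with h | h
      · exact Or.inr ⟨x :: a, by simp [h], List.suffix_refl _⟩
      · rcases ih h with h | ⟨l', rfl, hl'⟩
        · exact Or.inl h
        · exact Or.inr ⟨l', rfl, hl'.trans (List.suffix_cons x a)⟩

lemma suffix_prop (E : NRE) : ∀ F R, (F :: R) <:+ E.testsOf → ∀ G ∈ F.dtests, G ∈ R := by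
  induction E with
  | role σ =>
      intro F R h
      simp only [NRE.testsOf, List.suffix_nil] at h
      simp at h
  | comp E₁ E₂ ih₁ ih₂ =>
      intro F R h G hG
      rcases suffix_append_cases (a := E₁.testsOf) (b := E₂.testsOf) h with h | ⟨l', he, hl'⟩
      · exact ih₂ F R h G hG
      · cases l' with
        | nil =>
            simp only [List.nil_append] at he
            exact ih₂ F R (by rw [he]) G hG
        | cons F' l'' =>
            simp only [List.cons_append, List.cons.injEq] at he
            obtain ⟨rfl, rfl⟩ := he
            exact List.mem_append_left _ (ih₁ F l'' hl' G hG)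
  | union E₁ E₂ ih₁ ih₂ =>
      intro F R h G hG
      rcases suffix_append_cases (a := E₁.testsOf) (b := E₂.testsOf) h with h | ⟨l', he, hl'⟩
      · exact ih₂ F R h G hG
      · cases l' with
        | nil =>
            simp only [List.nil_append] at he
            exact ih₂ F R (by rw [he]) G hG
        | cons F' l'' =>
            simp only [List.cons_append, List.cons.injEq] at he
            obtain ⟨rfl, rfl⟩ := he
            exact List.mem_append_left _ (ih₁ F l'' hl' G hG)
  | star E ih => exact ih
  | test E ih =>
      intro F R h G hG
      rcases List.suffix_cons_iff.mp h with h | h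
      · rw [List.cons_eq_cons] at h
        obtain ⟨rfl, rfl⟩ := h
        exact dtests_subset _ G hG
      · exact ih F R h G hG

lemma pos_lemma (L : List NRE)
    (hsuf : ∀ F R, (F :: R) <:+ L → ∀ G ∈ F.dtests, G ∈ R) :
    ∀ (i : Fin L.length) (G : NRE), G ∈ (L.get i).dtests →
      ∃ j : Fin L.length, i < j ∧ L.get j = G := by
  intro i G hG
  have hdrop : L.drop i.val = L.get i :: L.drop (i.val + 1) := by
    rw [List.drop_eq_getElem_cons i.isLt]
    simp [List.get_eq_getElem]
  have hsufx : (L.get i :: L.drop (i.val + 1)) <:+ L := hdrop ▸ List.drop_suffix i.val L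
  have hmem : G ∈ L.drop (i.val + 1) := hsuf _ _ hsufx G hG
  obtain ⟨k, hk, hkG⟩ := List.mem_iff_getElem.mp hmem
  rw [List.length_drop] at hk
  have hlen : i.val + 1 + k < L.length := by omega
  refine ⟨⟨i.val + 1 + k, hlen⟩, by simp only [Fin.lt_def]; omega, ?_⟩
  rw [List.get_eq_getElem, ← hkG, List.getElem_drop]

/-- ε-moves of the stack machine -/
inductive Eps : List NRE → List NRE → Prop where
  | comp (E₁ E₂ k) : Eps (.comp E₁ E₂ :: k) (E₁ :: E₂ :: k)
  | unionL (E₁ E₂ k) : Eps (.union E₁ E₂ :: k) (E₁ :: k)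
  | unionR (E₁ E₂ k) : Eps (.union E₁ E₂ :: k) (E₂ :: k)
  | starSkip (E k) : Eps (.star E :: k) k
  | starRep (E k) : Eps (.star E :: k) (E :: .star E :: k)

abbrev EpsS : List NRE → List NRE → Prop := Relation.ReflTransGen Eps

/-- semantics of a stack of NREs: relational composition -/
def SemL (I : Interp) : List NRE → I.Dom → I.Dom → Prop
  | [], o, o' => o = o'
  | (G :: k), o, o'' => ∃ o', G.sem I o o' ∧ SemL I k o' o''

/-- the nested NFA built from a nesting-compatible list of NREs -/
def theM (L : List NRE) : NNFA where
  n := L.length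
  St := fun _ => List NRE
  init := fun i => [L.get i]
  final := fun _ => {s | EpsS s []}
  transRole := fun _ s σ s' => ∃ k, EpsS s (.role σ :: k) ∧ s' = k
  transTest := fun i s j s' => i < j ∧ ∃ k, EpsS s (.test (L.get j) :: k) ∧ s' = k
  test_gt := fun _ _ _ _ h => h.1

lemma semL_eps {I : Interp} {s t : List NRE} (h : Eps s t) {o o' : I.Dom}
    (ht : SemL I t o o') : SemL I s o o' := by
  cases h with
  | comp E₁ E₂ k =>
      obtain ⟨a, h1, b, h2, hk⟩ := ht
      exact ⟨b, ⟨a, h1, h2⟩, hk⟩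
  | unionL E₁ E₂ k =>
      obtain ⟨a, h1, hk⟩ := ht
      exact ⟨a, Or.inl h1, hk⟩
  | unionR E₁ E₂ k =>
      obtain ⟨a, h1, hk⟩ := ht
      exact ⟨a, Or.inr h1, hk⟩
  | starSkip E k =>
      exact ⟨o, Relation.ReflTransGen.refl, ht⟩
  | starRep E k =>
      obtain ⟨a, h1, b, h2, hk⟩ := ht
      exact ⟨b, Relation.ReflTransGen.head h1 h2, hk⟩

lemma semL_epsS {I : Interp} {s t : List NRE} (h : EpsS s t) {o o' : I.Dom}
    (ht : SemL I t o o') : SemL I s o o' := by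
  induction h using Relation.ReflTransGen.head_induction_on with
  | refl => exact ht
  | head h₁ _ ih => exact semL_eps h₁ ih

lemma accept_eps {L : List NRE} {I : Interp} {i : Fin (theM L).n} {s t : List NRE}
    (h : EpsS s t) {o o' : I.Dom}
    (ht : (theM L).Accept I i t ((theM L).final i) o o') :
    (theM L).Accept I i s ((theM L).final i) o o' := by
  cases ht with
  | refl hf => exact .refl (h.trans hf)
  | step htr hσ hrest =>
      obtain ⟨k, hst, rfl⟩ := htr
      exact .step ⟨_, h.trans hst, rfl⟩ hσ hrest
  | test htr hsub hrest =>
      obtain ⟨hij, k, hst, rfl⟩ := htr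
      exact .test ⟨hij, _, h.trans hst, rfl⟩ hsub hrest

lemma sound {L : List NRE} {I : Interp} :
    ∀ {i : Fin (theM L).n} {s : List NRE} {F : Set (List NRE)} {o o' : I.Dom},
      (theM L).Accept I i s F o o' → (∀ t ∈ F, EpsS t []) → SemL I s o o' := by
  intro i s F o o' h
  induction h with
  | refl hf =>
      intro hF
      exact semL_epsS (hF _ hf) rfl
  | step htr hσ hrest ih =>
      intro hF
      obtain ⟨k, hst, rfl⟩ := htr
      exact semL_epsS hst ⟨_, hσ, ih hF⟩
  | test htr hsub hrest ih₁ ih₂ =>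
      intro hF
      obtain ⟨hij, k, hst, rfl⟩ := htr
      obtain ⟨z, hz, hzeq⟩ := ih₁ (fun t ht => ht)
      exact semL_epsS hst ⟨_, ⟨rfl, z, hz⟩, ih₂ hF⟩

lemma complB {L : List NRE} {I : Interp} {i : Fin L.length}
    (Hor : ∀ j : Fin L.length, i < j → ∀ o o' : I.Dom, (L.get j).sem I o o' →
      (theM L).Accept I j ((theM L).init j) ((theM L).final j) o o')
    (G : NRE) (hG : ∀ F ∈ G.dtests, ∃ j : Fin L.length, i < j ∧ L.get j = F) :
    ∀ (k : List NRE) (o o' o'' : I.Dom), G.sem I o o' →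
      (theM L).Accept I i k ((theM L).final i) o' o'' →
      (theM L).Accept I i (G :: k) ((theM L).final i) o o'' := by
  induction G with
  | role σ =>
      intro k o o' o'' hσ hacc
      exact .step (σ := σ) ⟨k, Relation.ReflTransGen.refl, rfl⟩ hσ hacc
  | comp E₁ E₂ ih₁ ih₂ =>
      intro k o o' o'' hsem hacc
      obtain ⟨m, h1, h2⟩ := hsem
      have a2 := ih₂ (fun F hF => hG F (List.mem_append_right _ hF)) k m o' o'' h2 hacc
      have a1 := ih₁ (fun F hF => hG F (List.mem_append_left _ hF)) (E₂ :: k) o m o'' h1 a2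
      exact accept_eps (Relation.ReflTransGen.single (Eps.comp E₁ E₂ k)) a1
  | union E₁ E₂ ih₁ ih₂ =>
      intro k o o' o'' hsem hacc
      cases hsem with
      | inl h1 =>
          exact accept_eps (Relation.ReflTransGen.single (Eps.unionL E₁ E₂ k))
            (ih₁ (fun F hF => hG F (List.mem_append_left _ hF)) k o o' o'' h1 hacc)
      | inr h2 =>
          exact accept_eps (Relation.ReflTransGen.single (Eps.unionR E₁ E₂ k))
            (ih₂ (fun F hF => hG F (List.mem_append_right _ hF)) k o o' o'' h2 hacc)
  | star E ih =>
      intro k o o' o'' hsem hacc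
      induction hsem using Relation.ReflTransGen.head_induction_on with
      | refl => exact accept_eps (Relation.ReflTransGen.single (Eps.starSkip E k)) hacc
      | head h₁ h₂ ih' =>
          exact accept_eps (Relation.ReflTransGen.single (Eps.starRep E k))
            (ih hG (.star E :: k) _ _ o'' h₁ ih')
  | test E' ih =>
      intro k o o' o'' hsem hacc
      obtain ⟨rfl, z, hz⟩ := hsem
      obtain ⟨j, hij, hLj⟩ := hG E' (by simp [NRE.dtests])
      subst hLj
      exact .test ⟨hij, k, Relation.ReflTransGen.refl, rfl⟩ (Hor j hij o z hz) hacc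

lemma compl {L : List NRE} {I : Interp}
    (HL : ∀ (i : Fin L.length) (G : NRE), G ∈ (L.get i).dtests →
      ∃ j : Fin L.length, i < j ∧ L.get j = G) :
    ∀ (i : Fin L.length) (o o' : I.Dom), (L.get i).sem I o o' →
      (theM L).Accept I i ((theM L).init i) ((theM L).final i) o o' := by
  suffices h : ∀ (d : ℕ) (i : Fin L.length), L.length - i.val ≤ d →
      ∀ o o' : I.Dom, (L.get i).sem I o o' →
        (theM L).Accept I i ((theM L).init i) ((theM L).final i) o o' by
    intro i
    exact h L.length i (by omega)
  intro d
  induction d with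
  | zero =>
      intro i hi
      have := i.isLt
      omega
  | succ d ih =>
      intro i hi o o' hsem
      have Hor : ∀ j : Fin L.length, i < j → ∀ o o' : I.Dom, (L.get j).sem I o o' →
          (theM L).Accept I j ((theM L).init j) ((theM L).final j) o o' := by
        intro j hij
        have h1 := j.isLt
        have h2 : i.val < j.val := hij
        exact ih j (by omega)
      have hbase : (theM L).Accept I i ([] : List NRE) ((theM L).final i) o' o' :=
        .refl (Relation.ReflTransGen.refl)
      exact complB Hor (L.get i) (HL i) [] o o' o' hsem hbase



/-- every nested regular expression is equivalent, over every
interpretation, to a nested NFA (with a designated start state and final-state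
set belonging to a single automaton of the family). -/
theorem nre_to_nnfa (E : NRE) :
    ∃ (M : NNFA) (i : Fin M.n) (s₀ : M.St i) (F₀ : Set (M.St i)),
      ∀ (I : Interp) (o o' : I.Dom),
        E.sem I o o' ↔ M.Accept I i s₀ F₀ o o' := by
  have hlen : 0 < (E :: E.testsOf).length := by simp
  refine ⟨theM (E :: E.testsOf), ⟨0, hlen⟩, (theM (E :: E.testsOf)).init ⟨0, hlen⟩,
    (theM (E :: E.testsOf)).final ⟨0, hlen⟩, ?_⟩
  intro I o o'
  have HL : ∀ (i : Fin (E :: E.testsOf).length) (G : NRE),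
      G ∈ ((E :: E.testsOf).get i).dtests →
      ∃ j : Fin (E :: E.testsOf).length, i < j ∧ (E :: E.testsOf).get j = G := by
    apply pos_lemma
    intro F R hsufx G hG
    rcases List.suffix_cons_iff.mp hsufx with h | h
    · rw [List.cons_eq_cons] at h
      obtain ⟨rfl, rfl⟩ := h
      exact dtests_subset _ G hG
    · exact suffix_prop E F R h G hG
  constructor
  · intro h
    exact compl HL ⟨0, hlen⟩ o o' h
  · intro h
    obtain ⟨z, hz, hzeq⟩ := sound h (fun t ht => ht)
    exact hzeq ▸ hz

end Paper
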